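/- arXiv:1801.08215 — 2 statements merged into one kernel-verified Lean document; each statement's English description precedes it below -/
import Mathlib

section
/- For every integer n ≥ 0 there exists a positive constant c_n such that for all x ∈ ℝ and all w > 0, |∂ⁿ/∂xⁿ ∂/∂w C(x,w)| ≤ c_n · w^{−(n+1)/2}, where C is the normalized Black-Scholes function. -/
/-!
Differentiating in `w` gives the vega identity `∂C/∂w = φ(d₂) / (2√w)`, because
`eˣ φ(d₁) = φ(d₂)` makes the terms carrying `∂d₁/∂w` cancel. As a function of `x` this is a
Gaussian in the variable `x / √w`, so each `x`-derivative contributes a factor `1/√w`, while the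
derivatives of the Gaussian are Hermite polynomials times the Gaussian, hence bounded.
-/

open MeasureTheory Real

/-- The standard normal cumulative distribution function. -/
noncomputable def stdNormalCDF (z : ℝ) : ℝ :=
  ∫ u in Set.Iic z, (Real.sqrt (2 * Real.pi))⁻¹ * Real.exp (-u ^ 2 / 2)

/-- The normalized Black-Scholes function `C(x,w) = e^x N(d₁) - N(d₂)`. -/
noncomputable def bsC (x w : ℝ) : ℝ :=
  Real.exp x * stdNormalCDF (x / Real.sqrt w + Real.sqrt w / 2)
    - stdNormalCDF (x / Real.sqrt w + Real.sqrt w / 2 - Real.sqrt w)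

open Polynomial Filter Bornology Set Asymptotics

theorem iteratedDeriv_comp_mul_add {𝕜 F : Type*} [NontriviallyNormedField 𝕜] [NormedAddCommGroup F]
    [NormedSpace 𝕜 F] {n : ℕ} {f : 𝕜 → F} (hf : ContDiff 𝕜 n f) (a b x : 𝕜) :
    iteratedDeriv n (fun x => f (a * x + b)) x = a ^ n • iteratedDeriv n f (a * x + b) := by
  simpa [iteratedDeriv_comp_add_const] using
    congrFun (iteratedDeriv_comp_const_smul (f := fun z => f (z + b))
      (hf.comp (contDiff_id.add contDiff_const)) a) x

lemma isBounded_range_eval_mul_exp_neg_mul_sq (p : ℝ[X]) {a : ℝ} (ha : 0 < a) :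
    IsBounded (range fun y => p.eval y * exp (-a * y ^ 2)) := by
  rw [(by fun_prop : Continuous fun y => p.eval y * exp (-a * y ^ 2)).isBounded_range_iff_isBigO]
  have hp : p.eval =O[cocompact ℝ] fun y => y ^ p.natDegree := by
    simpa [← Metric.cobounded_eq_cocompact] using
      isBigO_cobounded_of_degree_le (Q := (X : ℝ[X]) ^ p.natDegree) (by simp [degree_le_natDegree])
  have hdecay : (fun y : ℝ => y ^ p.natDegree * exp (-a * y ^ 2)) =O[cocompact ℝ] (1 : ℝ → ℝ) := by
    rw [← isBigO_norm_left]
    refine ((tendsto_rpow_abs_mul_exp_neg_mul_sq_cocompact ha p.natDegree).isBigO_one ℝ).congr_left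
      fun y => ?_
    simp [rpow_natCast]
  exact (hp.mul (isBigO_refl _ _)).trans hdecay

lemma inv_sqrt_pow_succ {w : ℝ} (hw : 0 ≤ w) (n : ℕ) :
    (√w)⁻¹ ^ (n + 1) = w ^ (-((n : ℝ) + 1) / 2) := by
  rw [sqrt_eq_rpow, ← rpow_neg hw, ← rpow_natCast, ← rpow_mul hw]
  push_cast
  ring_nf

noncomputable def stdNormalPDF (u : ℝ) : ℝ := (√(2 * π))⁻¹ * exp (-u ^ 2 / 2)

lemma contDiff_stdNormalPDF : ContDiff ℝ ⊤ stdNormalPDF := by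
  unfold stdNormalPDF; fun_prop

lemma integrable_stdNormalPDF : Integrable stdNormalPDF := by
  convert (integrable_exp_neg_mul_sq (b := 1 / 2) (by norm_num)).const_mul (√(2 * π))⁻¹ using 3
  simp only [stdNormalPDF]
  ring_nf

lemma hasDerivAt_stdNormalCDF (z : ℝ) : HasDerivAt stdNormalCDF (stdNormalPDF z) z := by
  have hint := integrable_stdNormalPDF
  have hcdf : stdNormalCDF = fun t => stdNormalCDF 0 + ∫ u in (0 : ℝ)..t, stdNormalPDF u := by
    funext t
    rw [← intervalIntegral.integral_Iic_sub_Iic hint.integrableOn hint.integrableOn]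
    exact (add_sub_cancel _ _).symm
  rw [hcdf]
  exact ((contDiff_stdNormalPDF.continuous.integral_hasStrictDerivAt 0 z).hasDerivAt).const_add _

lemma exp_mul_stdNormalPDF_add_half {s : ℝ} (hs : s ≠ 0) (x : ℝ) :
    exp x * stdNormalPDF (x / s + s / 2) = stdNormalPDF (x / s - s / 2) := by
  simp only [stdNormalPDF]
  rw [mul_left_comm, ← exp_add]
  congr 2
  field_simp
  ring

lemma hasDerivAt_bsC_snd (x : ℝ) {w : ℝ} (hw : 0 < w) :
    HasDerivAt (bsC x ·) ((2 * √w)⁻¹ * stdNormalPDF (x / √w - √w / 2)) w := by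
  have hs : √w ≠ 0 := (sqrt_pos.2 hw).ne'
  have hsqrt : HasDerivAt sqrt (2 * √w)⁻¹ w := by simpa using hasDerivAt_sqrt hw.ne'
  -- the value of `d` is irrelevant: it cancels by `exp_mul_stdNormalPDF_add_half`
  obtain ⟨d, hd₁⟩ : ∃ d, HasDerivAt (fun w' => x / √w' + √w' / 2) d w :=
    ⟨_, (DifferentiableAt.hasDerivAt (by fun_prop (disch := positivity)))⟩
  have h := (((hasDerivAt_stdNormalCDF _).comp w hd₁).const_mul (exp x)).sub
    ((hasDerivAt_stdNormalCDF _).comp w (hd₁.sub hsqrt))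
  refine (h.congr_deriv ?_ : HasDerivAt (bsC x ·) _ w)
  rw [Pi.sub_apply, show x / √w + √w / 2 - √w = x / √w - √w / 2 by ring, ← mul_assoc,
    exp_mul_stdNormalPDF_add_half hs]
  ring

lemma exists_pos_abs_iteratedDeriv_stdNormalPDF_le (n : ℕ) :
    ∃ M > 0, ∀ y, |iteratedDeriv n stdNormalPDF y| ≤ M := by
  have hpdf : stdNormalPDF = fun u => (√(2 * π))⁻¹ * exp (-(u ^ 2 / 2)) := by
    funext u; rw [stdNormalPDF, neg_div]
  have hhermite : iteratedDeriv n stdNormalPDF = fun y =>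
      (C ((√(2 * π))⁻¹ * (-1) ^ n) * (hermite n).map (algebraMap ℤ ℝ)).eval y
        * exp (-(1 / 2) * y ^ 2) := by
    funext y
    rw [hpdf, iteratedDeriv_const_mul_field, iteratedDeriv_eq_iterate,
      deriv_gaussian_eq_hermite_mul_gaussian, eval_mul, eval_C, eval_map_algebraMap]
    ring_nf
  obtain ⟨M, hM, hle⟩ := (isBounded_range_eval_mul_exp_neg_mul_sq _ one_half_pos).exists_pos_norm_le
  exact ⟨M, hM, fun y => hhermite ▸ hle _ (mem_range_self y)⟩

/-- For every `n ≥ 0` there is a positive constant `c_n` such that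
`|∂ⁿ/∂xⁿ ∂/∂w C(x,w)| ≤ c_n · w^{-(n+1)/2}` for all `x ∈ ℝ` and `w > 0`. -/
theorem bsC_mixed_derivative_bound (n : ℕ) :
    ∃ c : ℝ, 0 < c ∧ ∀ x w : ℝ, 0 < w →
      |deriv^[n] (fun x' => deriv (fun w' => bsC x' w') w) x|
        ≤ c * w ^ (-((n : ℝ) + 1) / 2) := by
  obtain ⟨M, hM, hbound⟩ := exists_pos_abs_iteratedDeriv_stdNormalPDF_le n
  refine ⟨M / 2, half_pos hM, fun x w hw => ?_⟩
  have hvega : (fun x' => deriv (bsC x' ·) w)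
      = fun x' => (2 * √w)⁻¹ * stdNormalPDF ((√w)⁻¹ * x' + -(√w / 2)) := by
    funext x'
    rw [(hasDerivAt_bsC_snd x' hw).deriv, div_eq_inv_mul, sub_eq_add_neg]
  rw [hvega, ← iteratedDeriv_eq_iterate, iteratedDeriv_const_mul_field,
    iteratedDeriv_comp_mul_add (contDiff_stdNormalPDF.of_le le_top), smul_eq_mul,
    ← inv_sqrt_pow_succ hw.le, abs_mul, abs_mul, abs_of_pos (by positivity : 0 < (2 * √w)⁻¹),
    abs_of_pos (by positivity : 0 < (√w)⁻¹ ^ n)]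
  calc (2 * √w)⁻¹ * ((√w)⁻¹ ^ n * |iteratedDeriv n stdNormalPDF _|)
      ≤ (2 * √w)⁻¹ * ((√w)⁻¹ ^ n * M) := by gcongr; exact hbound _
    _ = M / 2 * (√w)⁻¹ ^ (n + 1) := by rw [mul_inv]; ring
end

section
/- Let ξ be a normal random variable with mean μ and variance σ² > 0, and let a ∈ ℝ be any constant. Then E[e^{aξ} · N(ξ)] = e^{aμ + a²σ²/2} · N( (μ + aσ²) / √(1 + σ²) ), where N is the standard normal cumulative distribution function. -/
open MeasureTheory Real ProbabilityTheory

noncomputable def gpdf (m v x : ℝ) : ℝ :=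
  (Real.sqrt (2 * Real.pi * v))⁻¹ * Real.exp (-(x - m) ^ 2 / (2 * v))

lemma gpdf_eq (m : ℝ) {v : ℝ} (hv : 0 < v) :
    gpdf m v = gaussianPDFReal m v.toNNReal := by
  funext x
  simp only [gpdf, gaussianPDFReal, Real.coe_toNNReal v hv.le]

lemma gpdf_nonneg (m v x : ℝ) : 0 ≤ gpdf m v x := by
  unfold gpdf; positivity

lemma measurable_gpdf (m v : ℝ) : Measurable (gpdf m v) := by
  unfold gpdf
  exact (((measurable_id.sub_const _).pow_const _).neg.div_const _).exp.const_mul _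

lemma integrable_gpdf (m : ℝ) {v : ℝ} (hv : 0 < v) : Integrable (gpdf m v) := by
  rw [gpdf_eq m hv]; exact integrable_gaussianPDFReal _ _

lemma integral_gpdf (m : ℝ) {v : ℝ} (hv : 0 < v) : ∫ x, gpdf m v x = 1 := by
  rw [gpdf_eq m hv]
  exact integral_gaussianPDFReal_eq_one m (by simp [Real.toNNReal_eq_zero, not_le, hv])

lemma gpdf_std (u : ℝ) : gpdf 0 1 u = (Real.sqrt (2 * Real.pi))⁻¹ * Real.exp (-u ^ 2 / 2) := by
  simp [gpdf]

lemma stdNormalCDF_eq (z : ℝ) : stdNormalCDF z = ∫ u in Set.Iic z, gpdf 0 1 u := by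
  simp [stdNormalCDF, gpdf_std]

lemma stdNormalCDF_nonneg (z : ℝ) : 0 ≤ stdNormalCDF z := by
  rw [stdNormalCDF_eq]
  exact setIntegral_nonneg measurableSet_Iic fun x _ => gpdf_nonneg _ _ _

lemma stdNormalCDF_le_one (z : ℝ) : stdNormalCDF z ≤ 1 := by
  have h := setIntegral_le_integral (μ := volume) (s := Set.Iic z)
    (integrable_gpdf 0 one_pos) (Filter.Eventually.of_forall fun x => gpdf_nonneg _ _ _)
  rw [integral_gpdf 0 one_pos] at h
  rw [stdNormalCDF_eq]
  exact h

lemma stdNormalCDF_monotone : Monotone stdNormalCDF := by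
  intro z₁ z₂ h
  rw [stdNormalCDF_eq, stdNormalCDF_eq]
  exact setIntegral_mono_set ((integrable_gpdf 0 one_pos).integrableOn)
    (Filter.Eventually.of_forall fun x => gpdf_nonneg _ _ _)
    (HasSubset.Subset.eventuallyLE (Set.Iic_subset_Iic.mpr h))

lemma measurable_stdNormalCDF : Measurable stdNormalCDF :=
  stdNormalCDF_monotone.measurable

lemma integral_gpdf_Iic (m : ℝ) {v : ℝ} (hv : 0 < v) (c : ℝ) :
    ∫ t in Set.Iic c, gpdf m v t = stdNormalCDF ((c - m) / Real.sqrt v) := by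
  set s := Real.sqrt v with hs_def
  have hs : 0 < s := Real.sqrt_pos.mpr hv
  have hs2 : s ^ 2 = v := Real.sq_sqrt hv.le
  set z := (c - m) / s with hz_def
  set H : ℝ → ℝ := (Set.Iic c).indicator (gpdf m v) with hH_def
  have key : ∀ u : ℝ, gpdf m v (s * u + m) = s⁻¹ * gpdf 0 1 u := by
    intro u
    unfold gpdf
    have h1 : Real.sqrt (2 * Real.pi * v) = Real.sqrt (2 * Real.pi) * s := by
      rw [hs_def, ← Real.sqrt_mul (by positivity)]
    have h2 : -(s * u + m - m) ^ 2 / (2 * v) = -(u - 0) ^ 2 / (2 * 1) := by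
      rw [← hs2]
      field_simp
      ring
    rw [h1, h2, mul_inv]
    ring
  have hmem : ∀ u : ℝ, (s * u + m ≤ c) ↔ u ≤ z := by
    intro u
    rw [← le_sub_iff_add_le, mul_comm, ← le_div_iff₀ hs]
  have hind : ∀ u : ℝ, H (s * u + m) = (Set.Iic z).indicator (fun u => s⁻¹ * gpdf 0 1 u) u := by
    intro u
    by_cases h : u ≤ z
    · rw [hH_def, Set.indicator_of_mem (Set.mem_Iic.mpr ((hmem u).mpr h)),
        Set.indicator_of_mem (Set.mem_Iic.mpr h), key]
    · rw [hH_def, Set.indicator_of_notMem (fun hc => h ((hmem u).mp (Set.mem_Iic.mp hc))),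
        Set.indicator_of_notMem (fun hc => h (Set.mem_Iic.mp hc))]
  have e2 : ∫ u, H (s * u + m) = s⁻¹ * stdNormalCDF z := by
    simp_rw [hind]
    rw [integral_indicator measurableSet_Iic, stdNormalCDF_eq, integral_const_mul]
  have e3 : ∫ u, H (s * u + m) = |s⁻¹| • ∫ t, H t := by
    calc ∫ u, H (s * u + m) = |s⁻¹| • ∫ y, H (y + m) :=
          Measure.integral_comp_mul_left (fun y => H (y + m)) s
      _ = |s⁻¹| • ∫ t, H t := by rw [integral_add_right_eq_self]
  have e4 := e3.symm.trans e2
  rw [abs_of_pos (inv_pos.mpr hs), smul_eq_mul] at e4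
  have e5 : ∫ t, H t = stdNormalCDF z := mul_left_cancel₀ (inv_ne_zero hs.ne') e4
  rw [← integral_indicator measurableSet_Iic]
  exact e5

lemma gpdf_tilt (m a x : ℝ) {v : ℝ} (hv : 0 < v) :
    Real.exp (a * x) * gpdf m v x
      = Real.exp (a * m + a ^ 2 * v / 2) * gpdf (m + a * v) v x := by
  unfold gpdf
  rw [mul_left_comm, mul_left_comm (Real.exp _), ← Real.exp_add, ← Real.exp_add]
  congr 2
  field_simp
  ring

lemma gpdf_conv_pointwise (m x t : ℝ) {v : ℝ} (hv : 0 < v) :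
    gpdf 0 1 (x + t) * gpdf m v x
      = gpdf (-m) (1 + v) t * gpdf ((m - v * t) / (1 + v)) (v / (1 + v)) x := by
  have h1v : (0:ℝ) < 1 + v := by linarith
  unfold gpdf
  have hc : (Real.sqrt (2 * π * 1))⁻¹ * (Real.sqrt (2 * π * v))⁻¹
      = (Real.sqrt (2 * π * (1 + v)))⁻¹ * (Real.sqrt (2 * π * (v / (1 + v))))⁻¹ := by
    rw [← mul_inv, ← mul_inv, ← Real.sqrt_mul (by positivity), ← Real.sqrt_mul (by positivity)]
    congr 2
    field_simp
  have he : Real.exp (-(x + t - 0) ^ 2 / (2 * 1)) * Real.exp (-(x - m) ^ 2 / (2 * v))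
      = Real.exp (-(t - -m) ^ 2 / (2 * (1 + v)))
        * Real.exp (-(x - (m - v * t) / (1 + v)) ^ 2 / (2 * (v / (1 + v)))) := by
    rw [← Real.exp_add, ← Real.exp_add]
    congr 1
    field_simp
    ring
  calc (Real.sqrt (2 * π * 1))⁻¹ * Real.exp (-(x + t - 0) ^ 2 / (2 * 1))
        * ((Real.sqrt (2 * π * v))⁻¹ * Real.exp (-(x - m) ^ 2 / (2 * v)))
      = (Real.sqrt (2 * π * 1))⁻¹ * (Real.sqrt (2 * π * v))⁻¹
        * (Real.exp (-(x + t - 0) ^ 2 / (2 * 1)) * Real.exp (-(x - m) ^ 2 / (2 * v))) := by ring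
    _ = (Real.sqrt (2 * π * (1 + v)))⁻¹ * (Real.sqrt (2 * π * (v / (1 + v))))⁻¹
        * (Real.exp (-(t - -m) ^ 2 / (2 * (1 + v)))
          * Real.exp (-(x - (m - v * t) / (1 + v)) ^ 2 / (2 * (v / (1 + v))))) := by
        rw [hc, he]
    _ = _ := by ring

lemma gpdf_conv_integral (m t : ℝ) {v : ℝ} (hv : 0 < v) :
    ∫ x, gpdf 0 1 (x + t) * gpdf m v x = gpdf (-m) (1 + v) t := by
  have h1v : (0:ℝ) < 1 + v := by linarith
  have hvv : 0 < v / (1 + v) := by positivity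
  simp_rw [fun x => gpdf_conv_pointwise m x t hv]
  rw [integral_const_mul, integral_gpdf _ hvv, mul_one]

lemma stdNormalCDF_shift (x : ℝ) :
    stdNormalCDF x = ∫ t in Set.Iic (0:ℝ), gpdf 0 1 (x + t) := by
  rw [stdNormalCDF_eq, ← integral_indicator measurableSet_Iic,
    ← integral_indicator measurableSet_Iic]
  have hind : ∀ t : ℝ, (Set.Iic (0:ℝ)).indicator (fun t => gpdf 0 1 (x + t)) t
      = (Set.Iic x).indicator (gpdf 0 1) (t + x) := by
    intro t
    by_cases h : t ≤ 0
    · rw [Set.indicator_of_mem (Set.mem_Iic.mpr h),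
        Set.indicator_of_mem (Set.mem_Iic.mpr (by linarith)), add_comm]
    · rw [Set.indicator_of_notMem (fun hc => h (Set.mem_Iic.mp hc)),
        Set.indicator_of_notMem (fun hc => h (by have := Set.mem_Iic.mp hc; linarith))]
  simp_rw [hind]
  rw [integral_add_right_eq_self]

lemma integrable_F {v : ℝ} (hv : 0 < v) (m t : ℝ) :
    Integrable (fun x => gpdf 0 1 (x + t) * gpdf m v x) := by
  refine Integrable.mono' (((integrable_gpdf m hv).const_mul
      ((Real.sqrt (2 * Real.pi * 1))⁻¹)))
    (((measurable_gpdf 0 1).comp (measurable_id.add_const t)).mul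
      (measurable_gpdf m v)).aestronglyMeasurable
    (Filter.Eventually.of_forall fun x => ?_)
  rw [Real.norm_eq_abs, abs_of_nonneg (mul_nonneg (gpdf_nonneg _ _ _) (gpdf_nonneg _ _ _))]
  refine mul_le_mul_of_nonneg_right ?_ (gpdf_nonneg _ _ _)
  unfold gpdf
  calc (Real.sqrt (2 * Real.pi * 1))⁻¹ * Real.exp (-(x + t - 0) ^ 2 / (2 * 1))
      ≤ (Real.sqrt (2 * Real.pi * 1))⁻¹ * 1 := by
        refine mul_le_mul_of_nonneg_left (Real.exp_le_one_iff.mpr ?_) (by positivity)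
        have : (0:ℝ) ≤ (x + t - 0) ^ 2 := sq_nonneg _
        linarith [div_nonneg this (by norm_num : (0:ℝ) ≤ 2 * 1)]
    _ = (Real.sqrt (2 * Real.pi * 1))⁻¹ := mul_one _

lemma integral_gpdf_mul_stdNormalCDF (m : ℝ) {v : ℝ} (hv : 0 < v) :
    ∫ x, gpdf m v x * stdNormalCDF x = stdNormalCDF (m / Real.sqrt (1 + v)) := by
  have h1v : (0:ℝ) < 1 + v := by linarith
  set F : ℝ → ℝ → ℝ := fun x t => gpdf 0 1 (x + t) * gpdf m v x with hF_def
  have hFnonneg : ∀ x t, 0 ≤ F x t := fun x t =>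
    mul_nonneg (gpdf_nonneg _ _ _) (gpdf_nonneg _ _ _)
  have hshift : ∀ x, gpdf m v x * stdNormalCDF x = ∫ t in Set.Iic (0:ℝ), F x t := by
    intro x
    rw [stdNormalCDF_shift x, ← integral_const_mul]
    simp_rw [hF_def, mul_comm (gpdf m v x)]
  have hFxint : ∀ x, Integrable (fun t => F x t) (volume.restrict (Set.Iic (0:ℝ))) := by
    intro x
    exact (((integrable_gpdf 0 one_pos).comp_add_left x).mul_const (gpdf m v x)).restrict
  have hmeasF : Measurable (Function.uncurry F) := by
    exact ((measurable_gpdf 0 1).comp (measurable_fst.add measurable_snd)).mul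
      ((measurable_gpdf m v).comp measurable_fst)
  have big : ∫⁻ x, ENNReal.ofReal (gpdf m v x * stdNormalCDF x)
      = ENNReal.ofReal (stdNormalCDF (m / Real.sqrt (1 + v))) := by
    calc ∫⁻ x, ENNReal.ofReal (gpdf m v x * stdNormalCDF x)
        = ∫⁻ x, ∫⁻ t in Set.Iic (0:ℝ), ENNReal.ofReal (F x t) := by
          refine lintegral_congr fun x => ?_
          rw [hshift x, ofReal_integral_eq_lintegral_ofReal (hFxint x)
            (Filter.Eventually.of_forall fun t => hFnonneg x t)]
      _ = ∫⁻ t in Set.Iic (0:ℝ), ∫⁻ x, ENNReal.ofReal (F x t) :=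
          lintegral_lintegral_swap (ENNReal.measurable_ofReal.comp hmeasF).aemeasurable
      _ = ∫⁻ t in Set.Iic (0:ℝ), ENNReal.ofReal (gpdf (-m) (1 + v) t) := by
          refine lintegral_congr fun t => ?_
          rw [← gpdf_conv_integral m t hv,
            ofReal_integral_eq_lintegral_ofReal (integrable_F hv m t)
            (Filter.Eventually.of_forall fun x => hFnonneg x t)]
      _ = ENNReal.ofReal (∫ t in Set.Iic (0:ℝ), gpdf (-m) (1 + v) t) :=
          (ofReal_integral_eq_lintegral_ofReal ((integrable_gpdf (-m) h1v).restrict)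
            (Filter.Eventually.of_forall fun t => gpdf_nonneg _ _ _)).symm
      _ = ENNReal.ofReal (stdNormalCDF (m / Real.sqrt (1 + v))) := by
          rw [integral_gpdf_Iic (-m) h1v 0]
          norm_num
  rw [integral_eq_lintegral_of_nonneg_ae
    (Filter.Eventually.of_forall fun x => mul_nonneg (gpdf_nonneg _ _ _) (stdNormalCDF_nonneg x))
    ((measurable_gpdf m v).mul measurable_stdNormalCDF).aestronglyMeasurable,
    big, ENNReal.toReal_ofReal (stdNormalCDF_nonneg _)]

lemma integral_gaussianReal_eq (m : ℝ) {v : ℝ} (hv : 0 < v) {f : ℝ → ℝ}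
    (hf : Measurable f) :
    ∫ x, f x ∂(gaussianReal m v.toNNReal) = ∫ x, gpdf m v x * f x := by
  have hv' : v.toNNReal ≠ 0 := by simp [Real.toNNReal_eq_zero, not_le, hv]
  rw [gaussianReal_of_var_ne_zero m hv']
  have hd : gaussianPDF m v.toNNReal
      = fun x => ((gaussianPDFReal m v.toNNReal x).toNNReal : ENNReal) := rfl
  rw [hd, integral_withDensity_eq_integral_smul
    ((measurable_gaussianPDFReal m v.toNNReal).real_toNNReal) f]
  refine integral_congr_ae (Filter.Eventually.of_forall fun x => ?_)
  simp only [NNReal.smul_def, smul_eq_mul, Real.coe_toNNReal _ (gaussianPDFReal_nonneg _ _ _)]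
  rw [← gpdf_eq m hv]

/-- For `ξ` normal with mean `μ` and variance `σ² > 0` and any constant `a`,
`E[e^{aξ} N(ξ)] = e^{aμ + a²σ²/2} N((μ + aσ²)/√(1+σ²))`. -/
theorem gaussian_expectation_exp_mul_cdf (μ σ a : ℝ) (hσ : 0 < σ) :
    ∫ x, Real.exp (a * x) * stdNormalCDF x ∂(gaussianReal μ (Real.toNNReal (σ ^ 2)))
      = Real.exp (a * μ + a ^ 2 * σ ^ 2 / 2)
        * stdNormalCDF ((μ + a * σ ^ 2) / Real.sqrt (1 + σ ^ 2)) := by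
  have hv : 0 < σ ^ 2 := by positivity
  rw [integral_gaussianReal_eq μ hv
    (f := fun x => Real.exp (a * x) * stdNormalCDF x)
    (((measurable_id.const_mul a).exp).mul measurable_stdNormalCDF)]
  have hpt : ∀ x, gpdf μ (σ ^ 2) x * (Real.exp (a * x) * stdNormalCDF x)
      = Real.exp (a * μ + a ^ 2 * σ ^ 2 / 2)
        * (gpdf (μ + a * σ ^ 2) (σ ^ 2) x * stdNormalCDF x) := by
    intro x
    have h := gpdf_tilt μ a x hv
    calc gpdf μ (σ ^ 2) x * (Real.exp (a * x) * stdNormalCDF x)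
        = (Real.exp (a * x) * gpdf μ (σ ^ 2) x) * stdNormalCDF x := by ring
      _ = (Real.exp (a * μ + a ^ 2 * σ ^ 2 / 2) * gpdf (μ + a * σ ^ 2) (σ ^ 2) x)
            * stdNormalCDF x := by rw [h]
      _ = _ := by ring
  simp_rw [hpt]
  rw [integral_const_mul, integral_gpdf_mul_stdNormalCDF _ hv]
end
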